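/- Let N be a nested set of the cycle graph C_m of cardinality k with 1 ≤ k ≤ m−1, and let d be the order of the rotation subgroup (D_m)_N ∩ ⟨σ_1⟩ of its stabilizer. Then d divides k, d divides m, and d + k ≤ m. Consequently α_m(d,k) = β_m(d,k) = 0 whenever d ∤ k, d ∤ m, or d + k > m. -/

import Mathlib

open Pointwise

def cycleGraph (m : ℕ) : SimpleGraph (ZMod m) where
  Adj i j := i ≠ j ∧ (j = i + 1 ∨ i = j + 1)
  symm := ⟨fun i j h => ⟨h.1.symm, h.2.symm⟩⟩
  loopless := ⟨fun i h => h.1 rfl⟩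

def IsConnSubset (m : ℕ) (I : Set (ZMod m)) : Prop :=
  ((cycleGraph m).induce I).Connected

def IsNested (m : ℕ) (N : Set (Set (ZMod m))) : Prop :=
  N.Finite ∧
  (∀ I ∈ N, I.Nonempty ∧ I ≠ Set.univ ∧ IsConnSubset m I) ∧
  (∀ I ∈ N, ∀ J ∈ N, I ⊆ J ∨ J ⊆ I ∨ I ∩ J = ∅) ∧
  (∀ S : Finset (Set (ZMod m)), ↑S ⊆ N → 2 ≤ S.card →
    ((S : Set (Set (ZMod m))).Pairwise fun I J => I ∩ J = ∅) →
    ¬ IsConnSubset m (⋃ I ∈ S, I))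

def rot (m : ℕ) : Equiv.Perm (ZMod m) := Equiv.addRight 1

def cycRefl (m : ℕ) : Equiv.Perm (ZMod m) := Equiv.neg (ZMod m)

def dihedral (m : ℕ) : Subgroup (Equiv.Perm (ZMod m)) :=
  Subgroup.closure {rot m, cycRefl m}

def IsReflection (m : ℕ) (φ : Equiv.Perm (ZMod m)) : Prop :=
  φ ∈ dihedral m ∧ φ ∉ Subgroup.zpowers (rot m)

def nestedStab (m : ℕ) (N : Set (Set (ZMod m))) : Subgroup (Equiv.Perm (ZMod m)) :=
  dihedral m ⊓ MulAction.stabilizer (Equiv.Perm (ZMod m)) N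

def rotStab (m : ℕ) (N : Set (Set (ZMod m))) : Subgroup (Equiv.Perm (ZMod m)) :=
  Subgroup.zpowers (rot m) ⊓ nestedStab m N

noncomputable def alphaNum (m d k : ℕ) : ℕ :=
  {N : Set (Set (ZMod m)) | IsNested m N ∧ N.ncard = k ∧
    Nat.card (rotStab m N) = d ∧ ¬ ∃ φ ∈ nestedStab m N, IsReflection m φ}.ncard

noncomputable def betaNum (m d k : ℕ) : ℕ :=
  {N : Set (Set (ZMod m)) | IsNested m N ∧ N.ncard = k ∧
    Nat.card (rotStab m N) = d ∧ ∃ φ ∈ nestedStab m N, IsReflection m φ}.ncard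

noncomputable def gammaNum (m d k : ℕ) : ℕ := alphaNum m d k + betaNum m d k

/-!
The rotations stabilizing `N` are translations `z ↦ z + c`. A nonzero translation fixes no point
of `ZMod m`, and it fixes no nonempty proper connected subset either, because such an arc has a
unique left endpoint (a point `x` of it with `x - 1` outside it). Hence the rotation stabilizer `R`
acts freely on `ZMod m`, on `N` and on the complement `Z` of `⋃₀ N`, so `|R|` divides `m`, `k`
and `|Z|`. Axiom (N3) gives every member of `N` a point lying in no smaller member, so
`k ≤ |⋃₀ N|`, and it rules out `⋃₀ N = ZMod m`, so `Z ≠ ∅` and `|R| ≤ |Z| = m - |⋃₀ N| ≤ m - k`.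
-/

theorem card_dvd_ncard_of_free {G α : Type*} [Group G] [Finite G] [MulAction G α] {s : Set α}
    (hs : ∀ g : G, ∀ x ∈ s, g • x ∈ s) (hfree : ∀ g : G, ∀ x ∈ s, g • x = x → g = 1) :
    Nat.card G ∣ s.ncard := by
  let p : SubMulAction G α := ⟨s, fun g x hx => hs g x hx⟩
  rcases s.finite_or_infinite with hfin | hinf
  · have : Finite p := hfin
    have := Fintype.ofFinite (MulAction.orbitRel.Quotient G p)
    have hstab : ∀ x : p, MulAction.stabilizer G x = ⊥ := fun x => by
      ext g
      simp only [MulAction.mem_stabilizer_iff, Subgroup.mem_bot, Subtype.ext_iff,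
        SubMulAction.val_smul]
      exact ⟨hfree g x x.2, fun h => h ▸ one_smul G _⟩
    rw [← Nat.card_coe_set_eq]
    change Nat.card G ∣ Nat.card p
    rw [Nat.card_congr (MulAction.selfEquivSigmaOrbitsQuotientStabilizer G p), Nat.card_sigma]
    refine Finset.dvd_sum fun ω _ => ?_
    rw [← Subgroup.index, hstab, Subgroup.index_bot]
  · rw [hinf.ncard]
    exact dvd_zero _

theorem ZMod.val_add_one_le {n : ℕ} (w : ZMod n) : (w + 1).val ≤ w.val + 1 :=
  (ZMod.val_add_le _ _).trans (by rw [ZMod.val_one_eq_one_mod]; gcongr; exact Nat.mod_le 1 n)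

theorem ZMod.add_one_eq_zero_of_val_lt {n : ℕ} [NeZero n] {w : ZMod n}
    (h : (w + 1).val < w.val) : w + 1 = 0 := by
  have hw := w.val_lt
  rw [ZMod.val_add, ZMod.val_one_eq_one_mod] at h
  rw [← ZMod.val_eq_zero, ZMod.val_add, ZMod.val_one_eq_one_mod]
  rcases Nat.lt_or_ge 1 n with hn | hn
  · rw [Nat.one_mod_eq_one.mpr (by omega)] at h ⊢
    rcases Nat.lt_or_ge (w.val + 1) n with h' | h'
    · rw [Nat.mod_eq_of_lt h'] at h
      omega
    · rw [show w.val + 1 = n by omega, Nat.mod_self]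
  · interval_cases n <;> omega

section CycleGraph

variable {m : ℕ} [NeZero m]

theorem isConnSubset_univ : IsConnSubset m Set.univ := by
  rw [IsConnSubset, (SimpleGraph.induceUnivIso _).connected_iff,
    SimpleGraph.connected_iff_exists_forall_reachable]
  have hreach : ∀ n : ℕ, (cycleGraph m).Reachable 0 n := fun n => by
    induction n with
    | zero => simp
    | succ n ih =>
      refine ih.trans ?_
      by_cases hn : (n : ZMod m) = (n + 1 : ℕ)
      · rw [← hn]
      · exact SimpleGraph.Adj.reachable ⟨hn, .inl (Nat.cast_succ n)⟩
  exact ⟨0, fun y => by simpa using hreach y.val⟩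

theorem exists_mem_sub_one_notMem {I : Set (ZMod m)} (hne : I.Nonempty) (hI : I ≠ Set.univ) :
    ∃ x ∈ I, x - 1 ∉ I := by
  by_contra! hclosed
  obtain ⟨a, ha⟩ := hne
  have hsub : ∀ n : ℕ, a - n ∈ I := fun n => by
    induction n with
    | zero => simpa using ha
    | succ n ih => simpa [sub_sub] using hclosed _ ih
  exact hI (Set.eq_univ_of_forall fun y => by simpa using hsub (a - y).val)

theorem IsConnSubset.eq_of_sub_one_notMem {I : Set (ZMod m)} (hI : IsConnSubset m I)
    {x y : ZMod m} (hx : x ∈ I) (hx' : x - 1 ∉ I) (hy : y ∈ I) (hy' : y - 1 ∉ I) : x = y := by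
  by_contra hxy
  obtain ⟨p⟩ := hI.preconnected ⟨x, hx⟩ ⟨y, hy⟩
  -- a walk in `I` from `x` to `y` has to leave the arc from `x` to `y - 1`, through `x - 1` or `y`
  obtain ⟨⟨⟨a, b⟩, hab⟩, -, ha, hb⟩ := p.exists_boundary_dart
    {z | ((z : ZMod m) - x).val < (y - x).val}
    (by simpa [ZMod.val_pos, sub_eq_zero] using Ne.symm hxy) (by simp)
  simp only [Set.mem_ofPred_eq, not_lt] at ha hb
  obtain hab | hab : (b : ZMod m) = a + 1 ∨ (a : ZMod m) = b + 1 := hab.2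
  · rw [hab, add_sub_right_comm] at hb
    have := ZMod.val_add_one_le ((a : ZMod m) - x)
    have hay : (a : ZMod m) + 1 = y := by
      rw [← sub_left_inj (a := x), add_sub_right_comm]
      exact ZMod.val_injective m (by omega)
    exact hy' (by rw [← hay, add_sub_cancel_right]; exact a.2)
  · rw [hab, add_sub_right_comm] at ha
    have hbx := ZMod.add_one_eq_zero_of_val_lt (by omega : ((b : ZMod m) - x + 1).val < _)
    rw [sub_add_eq_add_sub, sub_eq_zero] at hbx
    exact hx' (by rw [← hbx, add_sub_cancel_right]; exact b.2)

theorem IsConnSubset.eq_zero_of_addRight_smul_eq {I : Set (ZMod m)} (hI : IsConnSubset m I)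
    (hne : I.Nonempty) (hI' : I ≠ Set.univ) {c : ZMod m} (h : Equiv.addRight c • I = I) :
    c = 0 := by
  have hshift : ∀ z, z + c ∈ I ↔ z ∈ I := fun z => by
    conv_lhs => rw [← h]
    exact Set.smul_mem_smul_set_iff (a := Equiv.addRight c)
  obtain ⟨x, hx, hx'⟩ := exists_mem_sub_one_notMem hne hI'
  have := hI.eq_of_sub_one_notMem ((hshift x).2 hx) (by rwa [add_sub_right_comm, hshift]) hx hx'
  simpa using this

end CycleGraph

namespace IsNested

variable {m : ℕ} {N : Set (Set (ZMod m))}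

theorem exists_sUnion_subset (hN : IsNested m N) {M : Set (Set (ZMod m))} (hM : M ⊆ N)
    (hconn : IsConnSubset m (⋃₀ M)) : ∃ J ∈ M, ⋃₀ M ⊆ J := by
  obtain ⟨hfin, -, hN2, hN3⟩ := hN
  have hMfin : M.Finite := hfin.subset hM
  -- the maximal members of `M` are pairwise disjoint and cover `⋃₀ M`, so (N3) leaves only one
  set Mx := {K | Maximal (· ∈ M) K}
  have hMxfin : Mx.Finite := hMfin.subset fun K hK => hK.prop
  have hle : ∀ J ∈ M, ∃ K ∈ Mx, J ⊆ K := fun J hJ =>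
    (hMfin.exists_le_maximal hJ).imp fun K hK => ⟨hK.2, hK.1⟩
  have hsUnion : ⋃₀ Mx = ⋃₀ M := by
    refine (Set.sUnion_mono fun K hK => hK.prop).antisymm fun x ⟨J, hJ, hxJ⟩ => ?_
    obtain ⟨K, hK, hJK⟩ := hle J hJ
    exact ⟨K, hK, hJK hxJ⟩
  have hdisj : Mx.Pairwise fun I J => I ∩ J = ∅ := fun I hI J hJ hIJ => by
    rcases hN2 I (hM hI.prop) J (hM hJ.prop) with h | h | h
    · exact absurd (hI.eq_of_le hJ.prop h) hIJ
    · exact absurd (hJ.eq_of_le hI.prop h).symm hIJ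
    · exact h
  have hsub : Mx.Subsingleton := by
    rw [← Set.not_nontrivial_iff]
    intro hnt
    have := hMxfin.to_subtype
    refine hN3 hMxfin.toFinset ?_ ?_ (by simpa using hdisj) ?_
    · rw [Set.Finite.coe_toFinset]
      exact fun K hK => hM hK.prop
    · rw [← Set.ncard_eq_toFinset_card Mx hMxfin]
      exact Set.one_lt_ncard_iff_nontrivial.2 hnt
    · simpa [← Set.sUnion_eq_biUnion, hsUnion] using hconn
  obtain ⟨⟨-, J, hJ, -⟩⟩ := hconn.nonempty
  obtain ⟨K, hK, -⟩ := hle J hJ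
  refine ⟨K, hK.prop, fun x ⟨J', hJ', hxJ'⟩ => ?_⟩
  obtain ⟨K', hK', hJK'⟩ := hle J' hJ'
  exact hsub hK' hK ▸ hJK' hxJ'

theorem exists_mem_forall_ssubset_notMem (hN : IsNested m N) {I : Set (ZMod m)} (hI : I ∈ N) :
    ∃ x ∈ I, ∀ J ∈ N, J ⊂ I → x ∉ J := by
  by_contra! hcover
  have hsUnion : ⋃₀ {J ∈ N | J ⊂ I} = I :=
    (Set.sUnion_subset fun J hJ => hJ.2.subset).antisymm fun x hx => by
      obtain ⟨J, hJ, hJI, hxJ⟩ := hcover x hx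
      exact ⟨J, ⟨hJ, hJI⟩, hxJ⟩
  obtain ⟨J, ⟨-, hJI⟩, hsub⟩ :=
    hN.exists_sUnion_subset (fun J hJ => hJ.1) (hsUnion ▸ (hN.2.1 I hI).2.2)
  exact hJI.not_subset (hsUnion ▸ hsub)

variable [NeZero m]

theorem sUnion_ne_univ (hN : IsNested m N) : ⋃₀ N ≠ Set.univ := by
  intro h
  obtain ⟨J, hJ, hsub⟩ := hN.exists_sUnion_subset subset_rfl (h ▸ isConnSubset_univ)
  exact (hN.2.1 J hJ).2.1 (Set.univ_subset_iff.1 (h ▸ hsub))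

theorem ncard_le_ncard_sUnion (hN : IsNested m N) : N.ncard ≤ (⋃₀ N).ncard := by
  choose! f hf hf' using fun I (hI : I ∈ N) => hN.exists_mem_forall_ssubset_notMem hI
  refine Set.ncard_le_ncard_of_injOn f (fun I hI => ⟨I, hI, hf I hI⟩) fun I hI J hJ hIJ => ?_
  by_contra hne
  rcases hN.2.2.1 I hI J hJ with h | h | h
  · exact hf' J hJ I hI (h.ssubset_of_ne hne) (hIJ ▸ hf I hI)
  · exact hf' I hI J hJ (h.ssubset_of_ne (Ne.symm hne)) (hIJ ▸ hf J hJ)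
  · exact (Set.eq_empty_iff_forall_notMem.1 h) (f I) ⟨hf I hI, hIJ ▸ hf J hJ⟩

end IsNested

theorem rot_zpow (m : ℕ) (n : ℤ) : rot m ^ n = Equiv.addRight (n : ZMod m) := by
  induction n using Int.induction_on with
  | zero => ext; simp
  | succ n ih => rw [zpow_add_one, ih]; ext; simp [rot]; ring
  | pred n ih => rw [zpow_sub_one, ih]; ext; simp [rot]; ring

section RotStab

variable {m : ℕ} {N : Set (Set (ZMod m))}

theorem exists_eq_addRight_of_mem_zpowers_rot {φ : Equiv.Perm (ZMod m)}
    (hφ : φ ∈ Subgroup.zpowers (rot m)) : ∃ c : ZMod m, φ = Equiv.addRight c := by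
  obtain ⟨n, rfl⟩ := hφ
  exact ⟨n, rot_zpow m n⟩

theorem smul_mem_iff_of_mem_rotStab {φ : Equiv.Perm (ZMod m)} (hφ : φ ∈ rotStab m N)
    (I : Set (ZMod m)) : φ • I ∈ N ↔ I ∈ N :=
  MulAction.mem_stabilizer_set.1 hφ.2.2 I

theorem rotStab_eq_one_of_smul_eq (φ : rotStab m N) {x : ZMod m} (h : φ • x = x) : φ = 1 := by
  obtain ⟨c, hc⟩ := exists_eq_addRight_of_mem_zpowers_rot φ.2.1
  rw [Subgroup.smul_def, hc, Equiv.Perm.smul_def, Equiv.coe_addRight, add_eq_left] at h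
  simp [Subtype.ext_iff, hc, h]

theorem IsNested.rotStab_eq_one_of_smul_eq_of_mem [NeZero m] (hN : IsNested m N)
    (φ : rotStab m N) {I : Set (ZMod m)} (hI : I ∈ N) (h : φ • I = I) : φ = 1 := by
  obtain ⟨c, hc⟩ := exists_eq_addRight_of_mem_zpowers_rot φ.2.1
  obtain ⟨hne, hI', hconn⟩ := hN.2.1 I hI
  rw [Subgroup.smul_def, hc] at h
  simp [Subtype.ext_iff, hc, hconn.eq_zero_of_addRight_smul_eq hne hI' h]

variable [NeZero m]

theorem card_rotStab_dvd (N : Set (Set (ZMod m))) : Nat.card (rotStab m N) ∣ m := by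
  simpa using card_dvd_ncard_of_free (s := Set.univ) (fun _ _ _ => Set.mem_univ _)
    fun φ _ _ h => rotStab_eq_one_of_smul_eq φ h

theorem IsNested.card_rotStab_dvd_ncard (hN : IsNested m N) :
    Nat.card (rotStab m N) ∣ N.ncard :=
  card_dvd_ncard_of_free (fun φ I hI => (smul_mem_iff_of_mem_rotStab φ.2 I).2 hI)
    fun φ _ hI h => hN.rotStab_eq_one_of_smul_eq_of_mem φ hI h

theorem IsNested.card_rotStab_add_ncard_le (hN : IsNested m N) :
    Nat.card (rotStab m N) + N.ncard ≤ m := by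
  have hdvd : Nat.card (rotStab m N) ∣ (⋃₀ N)ᶜ.ncard := by
    refine card_dvd_ncard_of_free (fun φ z hz ⟨J, hJ, hzJ⟩ => hz ?_)
      fun φ _ _ h => rotStab_eq_one_of_smul_eq φ h
    refine ⟨(φ : Equiv.Perm (ZMod m))⁻¹ • J, ?_, Set.mem_inv_smul_set_iff.2 hzJ⟩
    rwa [← smul_mem_iff_of_mem_rotStab φ.2, smul_inv_smul]
  have hpos : 0 < (⋃₀ N)ᶜ.ncard := (Set.nonempty_compl.2 hN.sUnion_ne_univ).ncard_pos
  calc Nat.card (rotStab m N) + N.ncard ≤ (⋃₀ N)ᶜ.ncard + (⋃₀ N).ncard :=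
        add_le_add (Nat.le_of_dvd hpos hdvd) hN.ncard_le_ncard_sUnion
    _ = m := by rw [add_comm, Set.ncard_add_ncard_compl, Nat.card_zmod]

end RotStab

theorem rotation_order_divides (m : ℕ) (hm : 3 ≤ m) :
    (∀ (N : Set (Set (ZMod m))) (k : ℕ), IsNested m N → N.ncard = k →
      1 ≤ k → k ≤ m - 1 →
      Nat.card (rotStab m N) ∣ k ∧ Nat.card (rotStab m N) ∣ m ∧
        Nat.card (rotStab m N) + k ≤ m) ∧
    (∀ d k : ℕ, 0 < d → 0 < k → (¬ d ∣ k ∨ ¬ d ∣ m ∨ m < d + k) →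
      alphaNum m d k = 0 ∧ betaNum m d k = 0) := by
  have : NeZero m := ⟨by omega⟩
  have hbounds : ∀ N, IsNested m N → Nat.card (rotStab m N) ∣ N.ncard ∧
      Nat.card (rotStab m N) ∣ m ∧ Nat.card (rotStab m N) + N.ncard ≤ m := fun N hN =>
    ⟨hN.card_rotStab_dvd_ncard, card_rotStab_dvd N, hN.card_rotStab_add_ncard_le⟩
  refine ⟨fun N k hN hk _ _ => hk ▸ hbounds N hN, fun d k _ _ hbad => ?_⟩
  have hnone : ∀ N, IsNested m N → N.ncard = k → Nat.card (rotStab m N) ≠ d := by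
    rintro N hN rfl rfl
    obtain ⟨hdk, hdm, hle⟩ := hbounds N hN
    rcases hbad with h | h | h
    · exact h hdk
    · exact h hdm
    · omega
  have hempty : ∀ P : Set (Set (ZMod m)) → Prop,
      {N | IsNested m N ∧ N.ncard = k ∧ Nat.card (rotStab m N) = d ∧ P N}.ncard = 0 := by
    intro P
    rw [Set.ncard_eq_zero, Set.eq_empty_iff_forall_notMem]
    rintro N ⟨hN, hk, hd, -⟩
    exact hnone N hN hk hd
  exact ⟨hempty _, hempty _⟩
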